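/- arXiv:1303.0990 — 3 statements merged into one kernel-verified Lean document; each statement's English description precedes it below -/
import Mathlib

section
/- Let w₀ = [−1,−2,…,−n] be the longest element of B_n. Then for all w ∈ B_n, L(w·w₀) = L(w₀·w) = L(w₀) − L(w), where L(w₀) = n(n+1)/2. -/
/-!
`Lstat n w` is half of `#(Lset n w)`, so everything is proved for these cardinalities. Every
pair `i < j` of opposite parity is an inversion of `w₀`; since `w (-j) = -w j` and `w` is
injective, such a pair is an inversion of `w ∘ w₀` exactly when it is not one of `w`. Hence
`Lset n w` and `Lset n (w ∘ w₀)` partition `Lset n w₀`, which has `n (n + 1)` elements. The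
reflection `(i, j) ↦ (-j, -i)` identifies `Lset n (w ∘ w₀)` with `Lset n (w₀ ∘ w)`, and for
signed `w` it is a fixed-point-free involution of `Lset n w`, so all these cardinalities are
even and halving is exact.
-/

open Finset Polynomial

def IsSigned (n : ℕ) (w : ℤ → ℤ) : Prop :=
  (∀ j : ℤ, w (-j) = -w j) ∧
    Set.BijOn w (Set.Icc (-(n : ℤ)) n) (Set.Icc (-(n : ℤ)) n)

noncomputable def Lset (n : ℕ) (w : ℤ → ℤ) : Finset (ℤ × ℤ) :=
  (Finset.Icc (-(n : ℤ)) n ×ˢ Finset.Icc (-(n : ℤ)) n).filter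
    fun p => p.1 < p.2 ∧ w p.2 < w p.1 ∧ p.1 % 2 ≠ p.2 % 2

noncomputable def Lstat (n : ℕ) (w : ℤ → ℤ) : ℕ := (Lset n w).card / 2

noncomputable def invStat (n : ℕ) (w : ℤ → ℤ) : ℕ :=
  ((Finset.Icc (1 : ℤ) n ×ˢ Finset.Icc (1 : ℤ) n).filter
    fun p => p.1 < p.2 ∧ w p.2 < w p.1).card

noncomputable def negStat (n : ℕ) (w : ℤ → ℤ) : ℕ :=
  ((Finset.Icc (1 : ℤ) n).filter fun i => w i < 0).card

noncomputable def nspStat (n : ℕ) (w : ℤ → ℤ) : ℕ :=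
  ((Finset.Icc (1 : ℤ) n ×ˢ Finset.Icc (1 : ℤ) n).filter
    fun p => p.1 < p.2 ∧ w p.1 + w p.2 < 0).card

noncomputable def lenStat (n : ℕ) (w : ℤ → ℤ) : ℕ := invStat n w + negStat n w + nspStat n w

noncomputable def Dset (n : ℕ) (w : ℤ → ℤ) : Finset ℤ :=
  (Finset.Ico (0 : ℤ) n).filter fun i => w (i + 1) < w i

abbrev HypOct (n : ℕ) := Equiv.Perm (Fin n) × (Fin n → Bool)

def HypOct.fn {n : ℕ} (w : HypOct n) : ℤ → ℤ := fun j =>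
  if h : 1 ≤ j ∧ j ≤ (n : ℤ) then
    (if w.2 ⟨(j - 1).toNat, by omega⟩ then -1 else 1) *
      (((w.1 ⟨(j - 1).toNat, by omega⟩ : Fin n) : ℤ) + 1)
  else if h' : 1 ≤ -j ∧ -j ≤ (n : ℤ) then
    -((if w.2 ⟨(-j - 1).toNat, by omega⟩ then -1 else 1) *
      (((w.1 ⟨(-j - 1).toNat, by omega⟩ : Fin n) : ℤ) + 1))
  else 0

lemma mem_Lset {n : ℕ} {w : ℤ → ℤ} {p : ℤ × ℤ} :
    p ∈ Lset n w ↔ (-(n : ℤ) ≤ p.1 ∧ p.1 ≤ n) ∧ (-(n : ℤ) ≤ p.2 ∧ p.2 ≤ n) ∧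
      p.1 < p.2 ∧ w p.2 < w p.1 ∧ p.1 % 2 ≠ p.2 % 2 := by
  simp only [Lset, mem_filter, mem_product, mem_Icc]
  tauto

def negSwap : Equiv.Perm (ℤ × ℤ) :=
  Function.Involutive.toPerm (fun p => (-p.2, -p.1)) fun p => by simp

lemma negSwap_apply (p : ℤ × ℤ) : negSwap p = (-p.2, -p.1) := rfl

lemma negSwap_mem_Lset {n : ℕ} {w : ℤ → ℤ} {p : ℤ × ℤ} :
    negSwap p ∈ Lset n w ↔ p ∈ Lset n (fun j => -w (-j)) := by
  simp only [negSwap_apply, mem_Lset, neg_lt_neg_iff]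
  omega

lemma card_Lset_comp_neg (n : ℕ) (w : ℤ → ℤ) :
    #(Lset n (fun j => w (-j))) = #(Lset n (fun j => -w j)) :=
  card_equiv negSwap fun p => by simp only [negSwap_mem_Lset, neg_neg]

/-- For odd `w`, `negSwap` maps the pairs `(i, j)` of `Lset n w` with `i + j < 0` onto those
with `i + j > 0`; as `i + j` is odd, there are no others. -/
lemma even_card_Lset {n : ℕ} {w : ℤ → ℤ} (hodd : ∀ j, w (-j) = -w j) :
    Even #(Lset n w) := by
  have hw : (fun j => -w (-j)) = w := funext fun j => by rw [hodd, neg_neg]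
  have hhalves : #((Lset n w).filter fun p => p.1 + p.2 < 0)
      = #((Lset n w).filter fun p => ¬ p.1 + p.2 < 0) := by
    refine card_equiv negSwap fun p => ?_
    rw [mem_filter, mem_filter, negSwap_mem_Lset, hw]
    refine and_congr_right fun hp => ?_
    rw [mem_Lset] at hp
    simp only [negSwap_apply]
    omega
  rw [← card_filter_add_card_filter_not (fun p : ℤ × ℤ => p.1 + p.2 < 0), hhalves]
  exact Even.add_self _

/-- `(i, j) ↦ (j, (i + j + 1) / 2)` maps the pairs with `i + j > 0` onto the triangle `b ≤ a`,
and `(i, j) ↦ ((j - i + 1) / 2, 1 - i)` those with `i + j < 0` onto the triangle `a < b`. -/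
lemma card_Lset_neg (n : ℕ) : #(Lset n (fun j : ℤ => -j)) = n * (n + 1) := by
  have : #(Lset n (fun j : ℤ => -j)) = #(Icc (1 : ℤ) n ×ˢ Icc (1 : ℤ) (n + 1)) := by
    refine card_nbij'
      (fun p => if 0 < p.1 + p.2 then (p.2, (p.1 + p.2 + 1) / 2)
        else ((p.2 - p.1 + 1) / 2, 1 - p.1))
      (fun q => if q.2 ≤ q.1 then (2 * q.2 - 1 - q.1, q.1) else (1 - q.2, 2 * q.1 - q.2))
      ?_ ?_ ?_ ?_ <;>
    · rintro ⟨i, j⟩ h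
      simp only [coe_product, coe_Icc, Set.mem_prod, Set.mem_Icc, mem_coe, mem_Lset] at h ⊢
      split_ifs <;> simp only [Prod.mk.injEq, and_true, true_and] at * <;> omega
  rw [this, card_product, Int.card_Icc, Int.card_Icc]
  simp

lemma Lset_eq_filter (n : ℕ) (w : ℤ → ℤ) :
    Lset n w = (Lset n (fun j : ℤ => -j)).filter fun p => w p.2 < w p.1 := by
  ext p
  simp only [mem_filter, mem_Lset]
  omega

lemma Lset_comp_neg_eq_filter {n : ℕ} {w : ℤ → ℤ} (hodd : ∀ j, w (-j) = -w j)
    (hinj : Set.InjOn w (Set.Icc (-(n : ℤ)) n)) :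
    Lset n (fun j => w (-j)) = (Lset n (fun j : ℤ => -j)).filter fun p => ¬ w p.2 < w p.1 := by
  ext p
  simp only [mem_filter, mem_Lset, hodd, neg_lt_neg_iff]
  refine ⟨fun _ => by omega, ?_⟩
  rintro ⟨⟨h1, h2, hlt, -, _⟩, _⟩
  have : w p.1 ≠ w p.2 := fun h => hlt.ne (hinj h1 h2 h)
  omega

lemma card_Lset_add_card_Lset_comp_neg {n : ℕ} {w : ℤ → ℤ} (hodd : ∀ j, w (-j) = -w j)
    (hinj : Set.InjOn w (Set.Icc (-(n : ℤ)) n)) :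
    #(Lset n w) + #(Lset n (fun j => w (-j))) = n * (n + 1) := by
  rw [Lset_eq_filter n w, Lset_comp_neg_eq_filter hodd hinj, card_filter_add_card_filter_not,
    card_Lset_neg]

/-- `L(w·w₀) = L(w₀·w) = L(w₀) − L(w)`, with `L(w₀) = n(n+1)/2`, where
`w₀ : j ↦ -j` is the longest element. -/
theorem L_mul_longest (n : ℕ) (w : ℤ → ℤ) (hw : IsSigned n w) :
    Lstat n (fun j => w (-j)) = Lstat n (fun j => -(w j)) ∧
    Lstat n (fun j : ℤ => -j) = n * (n + 1) / 2 ∧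
    Lstat n (fun j => w (-j)) + Lstat n w = n * (n + 1) / 2 := by
  obtain ⟨hodd, hbij⟩ := hw
  have hsum := card_Lset_add_card_Lset_comp_neg hodd hbij.injOn
  obtain ⟨a, ha⟩ := even_card_Lset (n := n) hodd
  obtain ⟨b, hb⟩ := even_card_Lset (n := n) (w := fun j => w (-j)) fun j => by simp [hodd]
  refine ⟨by rw [Lstat, card_Lset_comp_neg, Lstat], by rw [Lstat, card_Lset_neg], ?_⟩
  simp only [Lstat]
  omega
end

section
/- For every n ∈ ℕ, Σ_{w ∈ B_n, w ascending} (−1)^{l(w)} X^{L(w)} = (1−X)(1−X³)···(1−X^{ñ}), where ñ is the largest odd integer ≤ n, and an element w ∈ B_n is ascending if w(1) < w(2) < ⋯ < w(n). -/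
open Finset Polynomial

/-!
An ascending `w ∈ Bₙ` is determined by the set `S ⊆ [1, n]` of those `m` for which `-m` occurs
among `w(1) < ⋯ < w(n)`: the window is the increasing enumeration of `{±m}` with signs chosen
by `S`. For such `w` there are no inversions, `neg = |S|`, and the entry `-m` in position `a`
forms a negative-sum pair exactly with the positions `a + 1, …, a + m - 1`; hence
`l(w) = Σ_{m ∈ S} m`. The involution `(i, j) ↦ (-j, -i)` halves `Lset` to its pairs of
positive sum; those starting at `0` contribute `⌈|S| / 2⌉` and those starting at `-a`
contribute `⌊m / 2⌋` for `m = -w(a)`.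

The sum over `S` of `(-1)^{Σ S} X^{⌈|S|/2⌉ + Σ ⌊m/2⌋}` is computed together with its variant
using `⌊|S| / 2⌋`: enlarging the ground set by `n + 1` couples the two as `F' = F + c X G`,
`G' = G + c F` with `c = (-1)^{n+1} X^{⌊(n+1)/2⌋}`, and two such steps multiply `F` by
`1 - X^{2p+1}`.
-/

theorem card_filter_product_eq_sum {α β : Type*} (s : Finset α) (t : Finset β)
    (P : α → β → Prop) [∀ a b, Decidable (P a b)] :
    #{p ∈ s ×ˢ t | P p.1 p.2} = ∑ a ∈ s, #{b ∈ t | P a b} := by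
  simp only [card_filter, sum_product]

theorem card_filter_Ioc_emod_two_ne (a : ℤ) (c : ℕ) :
    #{b ∈ Ioc a (a + c) | a % 2 ≠ b % 2} = (c + 1) / 2 := by
  induction c with
  | zero => simp
  | succ c ih =>
    have hIoc : Ioc a (a + (c + 1 : ℕ)) = insert (a + c + 1) (Ioc a (a + c)) := by
      ext b
      simp only [mem_Ioc, mem_insert]
      omega
    rw [hIoc, filter_insert]
    split_ifs with hpar
    · rw [card_insert_of_notMem (by simp), ih]
      omega
    · rw [ih]
      omega

theorem MonotoneOn.filter_Icc_lt_eq_Icc {α : Type*} [LinearOrder α] {w : ℤ → α} {N : ℤ}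
    (hw : MonotoneOn w (Set.Icc 1 N)) (c : α) :
    {a ∈ Icc 1 N | w a < c} = Icc 1 (#{a ∈ Icc 1 N | w a < c} : ℤ) := by
  set s := {a ∈ Icc 1 N | w a < c}
  ext b
  rw [mem_Icc]
  constructor
  · intro hb
    obtain ⟨hbN, hbc⟩ := mem_filter.mp hb
    rw [mem_Icc] at hbN
    have hsub : Icc 1 b ⊆ s := fun a ha => by
      rw [mem_Icc] at ha
      have haN : a ∈ Set.Icc 1 N := ⟨ha.1, ha.2.trans hbN.2⟩
      exact mem_filter.mpr ⟨mem_Icc.mpr haN, (hw haN hbN ha.2).trans_lt hbc⟩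
    have := card_le_card hsub
    rw [Int.card_Icc] at this
    omega
  · rintro ⟨hb1, hbs⟩
    have hsN : #s ≤ #(Icc 1 N) := card_filter_le _ _
    rw [Int.card_Icc] at hsN
    have hbN : b ∈ Set.Icc 1 N := ⟨hb1, by omega⟩
    refine mem_filter.mpr ⟨mem_Icc.mpr hbN, ?_⟩
    by_contra! hcb
    have hsub : s ⊆ Icc 1 (b - 1) := fun a ha => by
      obtain ⟨haN, hac⟩ := mem_filter.mp ha
      rw [mem_Icc] at haN ⊢
      refine ⟨haN.1, ?_⟩
      by_contra! hba
      exact (hcb.trans (hw hbN haN (by omega))).not_gt hac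
    have := card_le_card hsub
    rw [Int.card_Icc] at this
    omega

theorem Icc_one_eq_image_fin (n : ℕ) :
    Icc (1 : ℤ) n = univ.image fun j : Fin n => (j : ℤ) + 1 := by
  ext a
  simp only [mem_Icc, mem_image, mem_univ, true_and]
  constructor
  · intro ha
    exact ⟨⟨(a - 1).toNat, by omega⟩, by simp only; omega⟩
  · rintro ⟨j, rfl⟩
    have := j.isLt
    omega

theorem strictMonoOn_Icc_one_iff_fin {α : Type*} [Preorder α] {n : ℕ} (g : ℤ → α) :
    StrictMonoOn g (Set.Icc 1 n) ↔ StrictMono fun j : Fin n => g ((j : ℤ) + 1) := by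
  constructor
  · intro h i j hij
    have hi := i.isLt
    have hj := j.isLt
    rw [Fin.lt_def] at hij
    exact h ⟨by omega, by omega⟩ ⟨by omega, by omega⟩ (by omega)
  · intro h a ha b hb hab
    rw [← Finset.coe_Icc, Icc_one_eq_image_fin, coe_image] at ha hb
    obtain ⟨i, -, rfl⟩ := ha
    obtain ⟨j, -, rfl⟩ := hb
    exact h (Fin.lt_def.mpr (by dsimp only at hab; omega))

noncomputable def powersetGF (n : ℕ) (e : ℕ → ℕ) : ℤ[X] :=
  ∑ S ∈ (Icc 1 n).powerset, (-1) ^ (∑ m ∈ S, m) * X ^ (e #S + ∑ m ∈ S, m / 2)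

theorem powersetGF_succ (n : ℕ) (e : ℕ → ℕ) :
    powersetGF (n + 1) e =
      powersetGF n e + (-1) ^ (n + 1) * X ^ ((n + 1) / 2) * powersetGF n (fun k => e (k + 1)) := by
  have hn : n + 1 ∉ Icc 1 n := by simp
  rw [powersetGF, ← insert_Icc_right_eq_Icc_add_one (by omega), sum_powerset_insert hn, powersetGF,
    powersetGF, mul_sum]
  congr 1
  refine sum_congr rfl fun S hS => ?_
  have hS' : n + 1 ∉ S := fun h => hn (mem_powerset.mp hS h)
  simp only [sum_insert hS', card_insert_of_notMem hS']
  ring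

theorem powersetGF_add_one (n : ℕ) (e : ℕ → ℕ) :
    powersetGF n (fun k => e k + 1) = X * powersetGF n e := by
  rw [powersetGF, powersetGF, mul_sum]
  refine sum_congr rfl fun S _ => ?_
  ring

theorem powersetGF_ceil_succ (n : ℕ) :
    powersetGF (n + 1) (fun k => (k + 1) / 2) = powersetGF n (fun k => (k + 1) / 2) +
      (-1) ^ (n + 1) * X ^ ((n + 1) / 2) * (X * powersetGF n (· / 2)) := by
  rw [powersetGF_succ, ← powersetGF_add_one]
  congr 3
  funext k
  omega

theorem powersetGF_floor_succ (n : ℕ) :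
    powersetGF (n + 1) (· / 2) = powersetGF n (· / 2) +
      (-1) ^ (n + 1) * X ^ ((n + 1) / 2) * powersetGF n (fun k => (k + 1) / 2) :=
  powersetGF_succ n _

theorem powersetGF_ceil_half (n : ℕ) :
    powersetGF n (fun k => (k + 1) / 2) = ∏ k ∈ range ((n + 1) / 2), (1 - X ^ (2 * k + 1)) := by
  set P := fun p : ℕ => ∏ k ∈ range p, (1 - (X : ℤ[X]) ^ (2 * k + 1))
  have hodd : ∀ p, powersetGF (2 * p) (fun k => (k + 1) / 2) = P p →
      powersetGF (2 * p) (· / 2) = X ^ p * P p →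
      powersetGF (2 * p + 1) (fun k => (k + 1) / 2) = P (p + 1) ∧
        powersetGF (2 * p + 1) (· / 2) = 0 := by
    intro p hceil hfloor
    have hsign : (-1 : ℤ[X]) ^ (2 * p + 1) = -1 := Odd.neg_one_pow ⟨p, rfl⟩
    rw [powersetGF_ceil_succ, powersetGF_floor_succ, hceil, hfloor, hsign,
      show (2 * p + 1) / 2 = p by omega]
    simp only [P, prod_range_succ]
    constructor <;> ring
  have heven : ∀ p, powersetGF (2 * p) (fun k => (k + 1) / 2) = P p ∧
      powersetGF (2 * p) (· / 2) = X ^ p * P p := by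
    intro p
    induction p with
    | zero => simp [P, powersetGF]
    | succ p ih =>
      obtain ⟨hceil, hfloor⟩ := hodd p ih.1 ih.2
      have hsign : (-1 : ℤ[X]) ^ (2 * p + 1 + 1) = 1 := Even.neg_one_pow ⟨p + 1, by ring⟩
      rw [show 2 * (p + 1) = 2 * p + 1 + 1 by ring, powersetGF_ceil_succ (2 * p + 1),
        powersetGF_floor_succ (2 * p + 1), hceil, hfloor, hsign,
        show (2 * p + 1 + 1) / 2 = p + 1 by omega]
      constructor <;> ring
  obtain ⟨p, rfl | rfl⟩ := Nat.even_or_odd' n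
  · rw [show (2 * p + 1) / 2 = p by omega]
    exact (heven p).1
  · rw [show (2 * p + 1 + 1) / 2 = p + 1 by omega]
    exact (hodd p (heven p).1 (heven p).2).1

theorem card_Lset_eq_two_mul {n : ℕ} {w : ℤ → ℤ} (hodd : ∀ j, w (-j) = -w j) :
    #(Lset n w) = 2 * #{p ∈ Lset n w | 0 < p.1 + p.2} := by
  rw [← card_filter_add_card_filter_not (p := fun p : ℤ × ℤ => 0 < p.1 + p.2), two_mul]
  congr 1
  refine card_nbij' (fun p => (-p.2, -p.1)) (fun p => (-p.2, -p.1)) ?_ ?_ ?_ ?_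
  · intro p hp
    simp only [mem_coe, mem_filter, Lset, mem_product, mem_Icc, hodd] at hp ⊢
    omega
  · intro p hp
    simp only [mem_coe, mem_filter, Lset, mem_product, mem_Icc, hodd] at hp ⊢
    omega
  · intro p _
    simp
  · intro p _
    simp

noncomputable def negSet (n : ℕ) (w : ℤ → ℤ) : Finset ℕ :=
  {a ∈ Icc (1 : ℤ) n | w a < 0}.image fun a => (w a).natAbs

structure IsAscendingSignedPerm (n : ℕ) (w : ℤ → ℤ) : Prop where
  map_neg : ∀ j, w (-j) = -w j
  image_abs : (Icc (1 : ℤ) n).image (fun a => |w a|) = Icc 1 (n : ℤ)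
  strictMonoOn : StrictMonoOn w (Set.Icc 1 n)

namespace IsAscendingSignedPerm

variable {n : ℕ} {w : ℤ → ℤ}

theorem map_zero (hw : IsAscendingSignedPerm n w) : w 0 = 0 := by
  have := hw.map_neg 0
  rw [neg_zero] at this
  omega

theorem abs_mem (hw : IsAscendingSignedPerm n w) {a : ℤ} (ha : a ∈ Icc (1 : ℤ) n) :
    |w a| ∈ Icc (1 : ℤ) n :=
  hw.image_abs ▸ mem_image_of_mem _ ha

theorem injOn_abs (hw : IsAscendingSignedPerm n w) :
    Set.InjOn (fun a => |w a|) (Icc (1 : ℤ) n) :=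
  injOn_of_card_image_eq (by rw [hw.image_abs])

theorem injOn_natAbs (hw : IsAscendingSignedPerm n w) :
    Set.InjOn (fun a => (w a).natAbs) (Icc (1 : ℤ) n) := fun a ha b hb hab =>
  hw.injOn_abs ha hb (by simp only [Int.abs_eq_natAbs, hab])

theorem negSet_subset (hw : IsAscendingSignedPerm n w) : negSet n w ⊆ Icc 1 n := by
  intro m hm
  obtain ⟨a, ha, rfl⟩ := mem_image.mp hm
  have := hw.abs_mem (mem_filter.mp ha).1
  rw [mem_Icc, Int.abs_eq_natAbs] at this
  rw [mem_Icc]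
  omega

theorem sum_negSet (hw : IsAscendingSignedPerm n w) {M : Type*} [AddCommMonoid M]
    (g : ℕ → M) :
    ∑ m ∈ negSet n w, g m = ∑ a ∈ Icc (1 : ℤ) n with w a < 0, g (w a).natAbs :=
  sum_image fun _ ha _ hb => hw.injOn_natAbs (mem_filter.mp ha).1 (mem_filter.mp hb).1

theorem card_negSet (hw : IsAscendingSignedPerm n w) :
    #(negSet n w) = #{a ∈ Icc (1 : ℤ) n | w a < 0} :=
  card_image_of_injOn fun _ ha _ hb => hw.injOn_natAbs (mem_filter.mp ha).1 (mem_filter.mp hb).1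

theorem card_abs_lt (hw : IsAscendingSignedPerm n w) {m : ℤ} (hm : m ∈ Icc (1 : ℤ) n) :
    (#{a ∈ Icc (1 : ℤ) n | |w a| < m} : ℤ) = m - 1 := by
  have himage : {a ∈ Icc (1 : ℤ) n | |w a| < m}.image (fun a => |w a|) = Icc 1 (m - 1) := by
    rw [← filter_image (p := (· < m)), hw.image_abs]
    ext x
    simp only [mem_filter, mem_Icc] at hm ⊢
    omega
  have hinj := hw.injOn_abs.mono (coe_subset.mpr (filter_subset (fun a => |w a| < m) _))
  rw [← card_image_of_injOn hinj, himage, Int.card_Icc]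
  rw [mem_Icc] at hm
  omega

theorem card_lt_neg_apply (hw : IsAscendingSignedPerm n w) {a : ℤ} (ha : a ∈ Icc (1 : ℤ) n)
    (hneg : w a < 0) : (#{b ∈ Icc (1 : ℤ) n | w b < -w a} : ℤ) = a - w a - 1 := by
  have hsplit : {b ∈ Icc (1 : ℤ) n | w b < -w a} =
      {b ∈ Icc (1 : ℤ) n | b ≤ a} ∪ {b ∈ Icc (1 : ℤ) n | |w b| < -w a} := by
    rw [← filter_or]
    refine filter_congr fun b hb => ?_
    rw [← hw.strictMonoOn.le_iff_le (mem_Icc.mp hb) (mem_Icc.mp ha), abs_lt]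
    omega
  have hdisj : Disjoint {b ∈ Icc (1 : ℤ) n | b ≤ a} {b ∈ Icc (1 : ℤ) n | |w b| < -w a} := by
    rw [disjoint_filter]
    intro b hb hba habs
    have := hw.strictMonoOn.monotoneOn (mem_Icc.mp hb) (mem_Icc.mp ha) hba
    rw [abs_lt] at habs
    omega
  have hle : {b ∈ Icc (1 : ℤ) n | b ≤ a} = Icc 1 a := by
    ext b
    simp only [mem_filter, mem_Icc] at ha ⊢
    omega
  have hm : -w a ∈ Icc (1 : ℤ) n := abs_of_neg hneg ▸ hw.abs_mem ha
  rw [hsplit, card_union_of_disjoint hdisj, hle, Nat.cast_add, hw.card_abs_lt hm, Int.card_Icc]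
  rw [mem_Icc] at ha
  omega

theorem filter_lt_add_neg (hw : IsAscendingSignedPerm n w) {a : ℤ} (ha : a ∈ Icc (1 : ℤ) n) :
    {b ∈ Icc (1 : ℤ) n | a < b ∧ w a + w b < 0} =
      if w a < 0 then Ioc a (a - w a - 1) else ∅ := by
  split_ifs with hneg
  · have hrank := hw.strictMonoOn.monotoneOn.filter_Icc_lt_eq_Icc (-w a)
    rw [hw.card_lt_neg_apply ha hneg] at hrank
    ext b
    have hb := congrArg (b ∈ ·) hrank
    simp only [mem_filter, mem_Icc, mem_Ioc, eq_iff_iff] at ha hb ⊢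
    omega
  · refine filter_false_of_mem fun b hb ⟨hab, hsum⟩ => ?_
    have := hw.strictMonoOn (mem_Icc.mp ha) (mem_Icc.mp hb) hab
    omega

theorem sum_card_filter_lt_add_neg (hw : IsAscendingSignedPerm n w) (Q : ℤ → ℤ → Prop)
    [DecidableRel Q] :
    ∑ a ∈ Icc (1 : ℤ) n, #{b ∈ Icc (1 : ℤ) n | a < b ∧ w a + w b < 0 ∧ Q a b} =
      ∑ a ∈ Icc (1 : ℤ) n with w a < 0, #{b ∈ Ioc a (a - w a - 1) | Q a b} := by
  rw [sum_filter]
  refine sum_congr rfl fun a ha => ?_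
  have hrow : {b ∈ Icc (1 : ℤ) n | a < b ∧ w a + w b < 0 ∧ Q a b} =
      {b ∈ {b ∈ Icc (1 : ℤ) n | a < b ∧ w a + w b < 0} | Q a b} := by
    simp only [filter_filter, and_assoc]
  rw [hrow, hw.filter_lt_add_neg ha]
  split_ifs <;> simp

theorem invStat_eq_zero (hw : IsAscendingSignedPerm n w) : invStat n w = 0 := by
  refine card_eq_zero.mpr (filter_false_of_mem fun p hp ⟨hlt, hinv⟩ => ?_)
  rw [mem_product] at hp
  exact (hw.strictMonoOn (mem_Icc.mp hp.1) (mem_Icc.mp hp.2) hlt).not_gt hinv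

theorem nspStat_eq (hw : IsAscendingSignedPerm n w) :
    nspStat n w = ∑ m ∈ negSet n w, (m - 1) := by
  have hrows := hw.sum_card_filter_lt_add_neg fun _ _ => True
  simp only [and_true, filter_true] at hrows
  rw [nspStat, card_filter_product_eq_sum _ _ fun a b => a < b ∧ w a + w b < 0, hrows,
    hw.sum_negSet]
  refine sum_congr rfl fun a ha => ?_
  rw [Int.card_Ioc]
  have := (mem_filter.mp ha).2
  omega

theorem lenStat_eq (hw : IsAscendingSignedPerm n w) : lenStat n w = ∑ m ∈ negSet n w, m := by
  rw [lenStat, hw.invStat_eq_zero, negStat, ← hw.card_negSet, hw.nspStat_eq, zero_add,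
    card_eq_sum_ones, ← sum_add_distrib]
  refine sum_congr rfl fun m hm => ?_
  have := mem_Icc.mp (hw.negSet_subset hm)
  omega

theorem card_Lset_pos (hw : IsAscendingSignedPerm n w) :
    #{p ∈ Lset n w | 0 < p.1 + p.2} =
      #{p ∈ Icc (0 : ℤ) n ×ˢ Icc (1 : ℤ) n |
        p.1 < p.2 ∧ w p.1 + w p.2 < 0 ∧ p.1 % 2 ≠ p.2 % 2} := by
  refine card_nbij' (fun p => (-p.1, p.2)) (fun p => (-p.1, p.2)) ?_ ?_ ?_ ?_
  · intro p hp
    simp only [mem_coe, mem_filter, Lset, mem_product, mem_Icc, hw.map_neg] at hp ⊢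
    have hp1 : p.1 ≤ 0 := by
      by_contra! hpos
      have := hw.strictMonoOn (a := p.1) (b := p.2) ⟨by omega, by omega⟩ ⟨by omega, by omega⟩
        (by omega)
      omega
    omega
  · intro p hp
    simp only [mem_coe, mem_filter, Lset, mem_product, mem_Icc, hw.map_neg] at hp ⊢
    omega
  · intro p _
    simp
  · intro p _
    simp

theorem Lstat_eq (hw : IsAscendingSignedPerm n w) :
    Lstat n w = (#(negSet n w) + 1) / 2 + ∑ m ∈ negSet n w, m / 2 := by
  have hrow0 : {b ∈ Icc (1 : ℤ) n | 0 < b ∧ w 0 + w b < 0 ∧ 0 % 2 ≠ b % 2} =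
      {b ∈ Ioc (0 : ℤ) (0 + #(negSet n w)) | 0 % 2 ≠ b % 2} := by
    have hneg := hw.strictMonoOn.monotoneOn.filter_Icc_lt_eq_Icc 0
    rw [← hw.card_negSet] at hneg
    ext b
    have hb := congrArg (b ∈ ·) hneg
    simp only [mem_filter, mem_Icc, mem_Ioc, eq_iff_iff, hw.map_zero] at hb ⊢
    omega
  have hrows := hw.sum_card_filter_lt_add_neg fun a b => a % 2 ≠ b % 2
  rw [Lstat, card_Lset_eq_two_mul hw.map_neg, Nat.mul_div_cancel_left _ two_pos,
    hw.card_Lset_pos,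
    card_filter_product_eq_sum _ _ fun a b => a < b ∧ w a + w b < 0 ∧ a % 2 ≠ b % 2,
    ← insert_Icc_add_one_left_eq_Icc (by positivity : (0 : ℤ) ≤ n),
    sum_insert (by simp), zero_add, hrows, hrow0, card_filter_Ioc_emod_two_ne, hw.sum_negSet]
  congr 1
  refine sum_congr rfl fun a ha => ?_
  have := (mem_filter.mp ha).2
  rw [show a - w a - 1 = a + ((w a).natAbs - 1 : ℕ) by omega, card_filter_Ioc_emod_two_ne]
  omega

end IsAscendingSignedPerm

def signedTuple (n : ℕ) (S : Finset ℕ) : Fin n → ℤ := fun j =>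
  if (j : ℕ) + 1 ∈ S then -((j : ℤ) + 1) else (j : ℤ) + 1

theorem signedTuple_injective (n : ℕ) (S : Finset ℕ) :
    Function.Injective (signedTuple n S) := by
  intro i j hij
  have := congrArg Int.natAbs hij
  simp only [signedTuple] at this
  split_ifs at this <;> omega

namespace HypOct

variable {n : ℕ}

theorem fn_neg (w : HypOct n) (j : ℤ) : fn w (-j) = -fn w j := by
  rw [fn, fn]
  simp only [neg_neg]
  by_cases h1 : 1 ≤ j ∧ j ≤ (n : ℤ)
  · rw [dif_neg (by omega), dif_pos h1, dif_pos h1]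
  · by_cases h2 : 1 ≤ -j ∧ -j ≤ (n : ℤ)
    · rw [dif_pos h2, dif_pos h2, dif_neg h1, neg_neg]
    · rw [dif_neg h2, dif_neg h1, dif_neg h1, dif_neg h2, neg_zero]

theorem fn_natCast_add_one (w : HypOct n) (j : Fin n) :
    fn w ((j : ℤ) + 1) = (if w.2 j then -1 else 1) * ((w.1 j : ℤ) + 1) := by
  have hj : (⟨((j : ℤ) + 1 - 1).toNat, by omega⟩ : Fin n) = j := Fin.ext (by simp)
  rw [fn, dif_pos ⟨by omega, by omega⟩, hj]

theorem natAbs_fn_natCast_add_one (w : HypOct n) (j : Fin n) :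
    (fn w ((j : ℤ) + 1)).natAbs = (w.1 j : ℕ) + 1 := by
  rw [fn_natCast_add_one]
  split_ifs <;> omega

theorem fn_natCast_add_one_neg_iff (w : HypOct n) (j : Fin n) :
    fn w ((j : ℤ) + 1) < 0 ↔ w.2 j := by
  rw [fn_natCast_add_one]
  cases w.2 j <;> simp <;> omega

theorem image_abs_fn (w : HypOct n) :
    (Icc (1 : ℤ) n).image (fun a => |fn w a|) = Icc 1 (n : ℤ) := by
  have habs : (fun a => |fn w a|) ∘ (fun j : Fin n => (j : ℤ) + 1) =
      (fun j : Fin n => (j : ℤ) + 1) ∘ w.1 := by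
    funext j
    simp only [Function.comp_apply, Int.abs_eq_natAbs, natAbs_fn_natCast_add_one]
    push_cast
    rfl
  rw [Icc_one_eq_image_fin, image_image, habs, ← image_image, image_univ_equiv]

theorem isAscendingSignedPerm (w : HypOct n) (h : StrictMonoOn (fn w) (Set.Icc 1 n)) :
    IsAscendingSignedPerm n (fn w) :=
  ⟨w.fn_neg, w.image_abs_fn, h⟩

theorem negSet_fn (w : HypOct n) :
    negSet n (fn w) = ({j | w.2 j} : Finset (Fin n)).image fun j => (w.1 j : ℕ) + 1 := by
  rw [negSet, Icc_one_eq_image_fin, filter_image, image_image]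
  simp only [fn_natCast_add_one_neg_iff, Function.comp_def, natAbs_fn_natCast_add_one]

def withNegSet (σ : Equiv.Perm (Fin n)) (S : Finset ℕ) : HypOct n :=
  (σ, fun j => decide ((σ j : ℕ) + 1 ∈ S))

theorem fn_withNegSet (σ : Equiv.Perm (Fin n)) (S : Finset ℕ) (j : Fin n) :
    fn (withNegSet σ S) ((j : ℤ) + 1) = signedTuple n S (σ j) := by
  rw [fn_natCast_add_one, withNegSet, signedTuple]
  split_ifs with h1 h2 h2 <;> simp_all

theorem negSet_fn_withNegSet (σ : Equiv.Perm (Fin n)) {S : Finset ℕ} (hS : S ⊆ Icc 1 n) :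
    negSet n (fn (withNegSet σ S)) = S := by
  ext m
  rw [negSet_fn, mem_image]
  simp only [withNegSet, mem_filter, mem_univ, true_and, decide_eq_true_eq]
  constructor
  · rintro ⟨j, hj, rfl⟩
    exact hj
  · intro hm
    have := mem_Icc.mp (hS hm)
    refine ⟨σ.symm ⟨m - 1, by omega⟩, ?_, ?_⟩ <;> simp only [Equiv.apply_symm_apply] <;> grind

theorem withNegSet_negSet (w : HypOct n) : withNegSet w.1 (negSet n (fn w)) = w := by
  refine Prod.ext rfl (funext fun j => ?_)
  simp [withNegSet, negSet_fn, Fin.val_inj]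

noncomputable def ascendingOf (S : Finset ℕ) : HypOct n :=
  withNegSet (Tuple.sort (signedTuple n S)) S

theorem strictMonoOn_fn_ascendingOf (S : Finset ℕ) :
    StrictMonoOn (fn (ascendingOf (n := n) S)) (Set.Icc 1 n) := by
  rw [strictMonoOn_Icc_one_iff_fin]
  simp only [ascendingOf, fn_withNegSet]
  exact (Tuple.monotone_sort _).strictMono_of_injective
    ((signedTuple_injective n S).comp (Equiv.injective _))

theorem ascendingOf_negSet (w : HypOct n) (h : StrictMonoOn (fn w) (Set.Icc 1 n)) :
    ascendingOf (negSet n (fn w)) = w := by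
  set S := negSet n (fn w)
  rw [strictMonoOn_Icc_one_iff_fin] at h
  have hmono : Monotone (signedTuple n S ∘ w.1) := by
    convert h.monotone using 1
    funext j
    rw [Function.comp_apply, ← fn_withNegSet, withNegSet_negSet]
  have hsort : Tuple.sort (signedTuple n S) = w.1 :=
    (DFunLike.coe_injective ((signedTuple_injective n S).comp_left
      (Tuple.comp_sort_eq_comp_iff_monotone.mpr hmono))).symm
  rw [ascendingOf, hsort, withNegSet_negSet]

end HypOct

/-- The signed generating function of `L` over the ascending elements of `Bₙ`
is `(1−X)(1−X³)⋯(1−X^ñ)`, where `ñ` is the largest odd integer `≤ n`. -/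
theorem ascending_sum (n : ℕ) :
    ∑ w ∈ Finset.univ.filter (fun w : HypOct n =>
          ∀ i ∈ Finset.Icc (1 : ℤ) n, ∀ j ∈ Finset.Icc (1 : ℤ) n,
            i < j → HypOct.fn w i < HypOct.fn w j),
        ((-1 : Polynomial ℤ) ^ lenStat n (HypOct.fn w) * X ^ Lstat n (HypOct.fn w))
      = ∏ k ∈ Finset.range ((n + 1) / 2), (1 - X ^ (2 * k + 1)) := by
  set A := Finset.univ.filter (fun w : HypOct n => ∀ i ∈ Finset.Icc (1 : ℤ) n,
    ∀ j ∈ Finset.Icc (1 : ℤ) n, i < j → HypOct.fn w i < HypOct.fn w j)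
  have hA : ∀ w ∈ A, StrictMonoOn (HypOct.fn w) (Set.Icc 1 n) := fun w hw => by
    rw [← coe_Icc]
    exact (mem_filter.mp hw).2
  rw [← powersetGF_ceil_half, powersetGF]
  refine sum_nbij' (fun w => negSet n (HypOct.fn w)) HypOct.ascendingOf ?_ ?_ ?_ ?_ ?_
  · intro w hw
    exact mem_powerset.mpr (w.isAscendingSignedPerm (hA w hw)).negSet_subset
  · intro S _
    refine mem_filter.mpr ⟨mem_univ _, ?_⟩
    have := HypOct.strictMonoOn_fn_ascendingOf (n := n) S
    rwa [← coe_Icc] at this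
  · exact fun w hw => w.ascendingOf_negSet (hA w hw)
  · exact fun S hS => HypOct.negSet_fn_withNegSet _ (mem_powerset.mp hS)
  · intro w hw
    have h := w.isAscendingSignedPerm (hA w hw)
    rw [h.lenStat_eq, h.Lstat_eq]
end

section
/- An even chessboard element w ∈ C_{n,0} lies in M_n (i.e. both factors of its parabolic factorisation w = w^{[n−1]} w_{[n−1]} are chessboard elements) if and only if w has no odd sandwich. -/
open Finset Polynomial

/-- `v` is an even chessboard element of `Bₙ`. -/
def EvenChess (n : ℕ) (v : ℤ → ℤ) : Prop :=
  ∀ j ∈ Finset.Icc (1 : ℤ) n, |v j| % 2 = j % 2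

/-- `v` is a chessboard element of `Bₙ`. -/
def Chess (n : ℕ) (v : ℤ → ℤ) : Prop :=
  (∀ j ∈ Finset.Icc (1 : ℤ) n, |v j| % 2 = j % 2) ∨
    (∀ j ∈ Finset.Icc (1 : ℤ) n, |v j| % 2 ≠ j % 2)

/-- The row pattern of `w` at row `i` is `+1`, i.e. the value `i` is taken
(positively) by `w` on `{1, …, n}`. -/
def RhoPos (n : ℕ) (w : ℤ → ℤ) (i : ℤ) : Prop :=
  ∃ j ∈ Finset.Icc (1 : ℤ) n, w j = i

/-- `(r, h)` is an odd sandwich in `w`. -/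
def OddSandwich (n : ℕ) (w : ℤ → ℤ) (r h : ℤ) : Prop :=
  1 ≤ r ∧ r ≤ (n : ℤ) - 2 ∧ 1 ≤ h ∧ h ≤ (n : ℤ) - 1 ∧ h % 2 = 1 ∧ r + h + 1 ≤ (n : ℤ) ∧
    (((RhoPos n w r ↔ RhoPos n w (r + h + 1)) ∧
        (∀ i : ℤ, 1 ≤ i → i ≤ h → ¬(RhoPos n w r ↔ RhoPos n w (r + i)))) ∨
      (r = 1 ∧ (∀ i : ℤ, 1 ≤ i → i ≤ h → (RhoPos n w 1 ↔ RhoPos n w (1 + i))) ∧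
        ¬(RhoPos n w 1 ↔ RhoPos n w (h + 2))))


/-!
The values `u 1 < ⋯ < u n` of the ascending factor contain exactly one of `±i` for every row `i`,
namely `ρ(i) i`. Positions `j, j + 1` carry consecutive values, so `u` is a chessboard element iff
any two consecutive values have different parity. Reading off the sign pattern `ρ`, two
consecutive values of equal parity are exactly an odd sandwich: `r < r + h + 1` (both rows
positive), `-(r + h + 1) < -r` (both negative), or, across zero, `-(h + 2) < 1` and `-1 < h + 2`
(the initial run of `ρ` has even length `h + 1`). Finally `|u (v j)| ≡ j` and `v` is positive, so
`v j ≡ j` exactly when `|u (v j)| ≡ v j`: `v` is a chessboard element iff `u` is.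
-/

theorem abs_emod_two (a : ℤ) : |a| % 2 = a % 2 := by
  rcases abs_choice a with h | h <;> omega

theorem chess_iff_forall_emod_two_ne {n : ℕ} {f : ℤ → ℤ} :
    Chess n f ↔ ∀ j : ℤ, 1 ≤ j → j + 1 ≤ n → f j % 2 ≠ f (j + 1) % 2 := by
  simp only [Chess, Finset.mem_Icc, abs_emod_two]
  constructor
  · rintro (hc | hc) j h1 h2 <;>
      have := hc j ⟨h1, by omega⟩ <;> have := hc (j + 1) ⟨by omega, h2⟩ <;> omega
  · intro halt
    have hconst : ∀ j : ℤ, 1 ≤ j → j ≤ n → (f j + j) % 2 = (f 1 + 1) % 2 := by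
      intro j hj
      induction j, hj using Int.leInduction with
      | base => intro; rfl
      | succ k hk ih =>
        intro hkn
        have := ih (by omega)
        have := halt k hk hkn
        omega
    rcases Int.emod_two_eq_zero_or_one (f 1 + 1) with h | h
    · left
      intro j hj
      have := hconst j hj.1 hj.2
      omega
    · right
      intro j hj
      have := hconst j hj.1 hj.2
      omega

def ConsecutiveValues (n : ℕ) (u : ℤ → ℤ) (a b : ℤ) : Prop :=
  RhoPos n u a ∧ RhoPos n u b ∧ a < b ∧ ∀ x, a < x → x < b → ¬ RhoPos n u x

section Ascending

variable {n : ℕ} {u : ℤ → ℤ}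

theorem consecutiveValues_iff (hasc : StrictMonoOn u (Set.Icc 1 n)) {a b : ℤ} :
    ConsecutiveValues n u a b ↔ ∃ j : ℤ, 1 ≤ j ∧ j + 1 ≤ n ∧ u j = a ∧ u (j + 1) = b := by
  constructor
  · rintro ⟨⟨l, hl, rfl⟩, ⟨l', hl', rfl⟩, hlt, hgap⟩
    rw [Finset.mem_Icc] at hl hl'
    have hll' : l < l' := (hasc.lt_iff_lt hl hl').1 hlt
    have hnext : (l + 1 : ℤ) ∈ Set.Icc 1 (n : ℤ) := ⟨by omega, by omega⟩
    refine ⟨l, hl.1, by omega, rfl, ?_⟩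
    by_contra hne
    have hle : u (l + 1) ≤ u l' := (hasc.le_iff_le hnext hl').2 (by omega)
    exact hgap (u (l + 1)) (hasc hl hnext (lt_add_one l)) (lt_of_le_of_ne hle hne)
      ⟨l + 1, Finset.mem_Icc.2 hnext, rfl⟩
  · rintro ⟨j, h1, h2, rfl, rfl⟩
    have hj : j ∈ Set.Icc 1 (n : ℤ) := ⟨h1, by omega⟩
    have hj' : (j + 1 : ℤ) ∈ Set.Icc 1 (n : ℤ) := ⟨by omega, h2⟩
    refine ⟨⟨j, Finset.mem_Icc.2 hj, rfl⟩, ⟨j + 1, Finset.mem_Icc.2 hj', rfl⟩,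
      hasc hj hj' (lt_add_one j), ?_⟩
    rintro x hx1 hx2 ⟨l, hl, rfl⟩
    rw [Finset.mem_Icc] at hl
    rw [hasc.lt_iff_lt hj hl] at hx1
    rw [hasc.lt_iff_lt hl hj'] at hx2
    omega

theorem chess_iff_forall_consecutiveValues (hasc : StrictMonoOn u (Set.Icc 1 n)) :
    Chess n u ↔ ∀ a b, ConsecutiveValues n u a b → a % 2 ≠ b % 2 := by
  simp only [chess_iff_forall_emod_two_ne, consecutiveValues_iff hasc]
  constructor
  · rintro h a b ⟨j, h1, h2, rfl, rfl⟩
    exact h j h1 h2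
  · intro h j h1 h2
    exact h _ _ ⟨j, h1, h2, rfl, rfl⟩

end Ascending

namespace IsSigned

variable {n : ℕ} {u : ℤ → ℤ}

theorem map_zero (hu : IsSigned n u) : u 0 = 0 := by
  have := hu.1 0
  rw [neg_zero] at this
  omega

theorem rhoPos_bounds (hu : IsSigned n u) {x : ℤ} (hx : RhoPos n u x) :
    x ≠ 0 ∧ -(n : ℤ) ≤ x ∧ x ≤ n := by
  obtain ⟨j, hj, rfl⟩ := hx
  rw [Finset.mem_Icc] at hj
  have hmem : j ∈ Set.Icc (-(n : ℤ)) n := ⟨by omega, hj.2⟩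
  have h0 : (0 : ℤ) ∈ Set.Icc (-(n : ℤ)) n := ⟨by omega, by omega⟩
  refine ⟨fun h => ?_, hu.2.1 hmem⟩
  have := hu.2.2.1 hmem h0 (h.trans hu.map_zero.symm)
  omega

theorem not_rhoPos_neg (hu : IsSigned n u) {x : ℤ} (hx : RhoPos n u x) :
    ¬ RhoPos n u (-x) := by
  rintro ⟨k, hk, hkx⟩
  obtain ⟨j, hj, rfl⟩ := hx
  rw [Finset.mem_Icc] at hj hk
  have hjk : j = -k := hu.2.2.1 (⟨by omega, hj.2⟩ : j ∈ Set.Icc (-(n : ℤ)) n)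
    ⟨by omega, by omega⟩ (by rw [hu.1, hkx, neg_neg])
  omega

theorem rhoPos_neg_of_not_rhoPos (hu : IsSigned n u) {x : ℤ} (hx0 : x ≠ 0)
    (hxl : -(n : ℤ) ≤ x) (hxu : x ≤ n) (hx : ¬ RhoPos n u x) : RhoPos n u (-x) := by
  obtain ⟨j, hj, hjx⟩ := hu.2.2.2 (⟨by omega, by omega⟩ : -x ∈ Set.Icc (-(n : ℤ)) n)
  rcases lt_trichotomy j 0 with hneg | rfl | hpos
  · refine absurd ⟨-j, Finset.mem_Icc.2 ⟨by omega, by linarith [hj.1]⟩, ?_⟩ hx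
    rw [hu.1, hjx, neg_neg]
  · rw [hu.map_zero] at hjx
    omega
  · exact ⟨j, Finset.mem_Icc.2 ⟨hpos, hj.2⟩, hjx⟩

theorem bijOn_Icc_one_of_pos (hu : IsSigned n u)
    (hpos : ∀ j ∈ Finset.Icc (1 : ℤ) n, 0 < u j) : Set.BijOn u (Set.Icc 1 n) (Set.Icc 1 n) := by
  have hIcc : Set.Icc 1 (n : ℤ) ⊆ Set.Icc (-(n : ℤ)) n := Set.Icc_subset_Icc (by omega) le_rfl
  refine ⟨fun j hj => ⟨hpos j (Finset.mem_Icc.2 hj), (hu.2.1 (hIcc hj)).2⟩,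
    hu.2.2.1.mono hIcc, fun m hm => ?_⟩
  obtain ⟨j, hj, rfl⟩ := hu.2.2.2 (hIcc hm)
  rcases lt_trichotomy j 0 with hneg | rfl | hjpos
  · have := hpos (-j) (Finset.mem_Icc.2 ⟨by omega, by linarith [hj.1]⟩)
    rw [hu.1] at this
    exact absurd hm.1 (by omega)
  · rw [hu.map_zero] at hm
    exact absurd hm.1 (by omega)
  · exact ⟨j, ⟨hjpos, hj.2⟩, rfl⟩

theorem exists_oddSandwich_of_consecutiveValues (hu : IsSigned n u) {a b : ℤ}
    (hab : ConsecutiveValues n u a b) (hpar : a % 2 = b % 2) :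
    ∃ r h, OddSandwich n u r h := by
  obtain ⟨ha, hb, hlt, hgap⟩ := hab
  obtain ⟨ha0, ha1, ha2⟩ := hu.rhoPos_bounds ha
  obtain ⟨hb0, hb1, hb2⟩ := hu.rhoPos_bounds hb
  have hflip : ∀ x, a < -x → -x < b → x ≠ 0 → RhoPos n u x := fun x h1 h2 h0 => by
    simpa using hu.rhoPos_neg_of_not_rhoPos (x := -x) (by omega) (by omega) (by omega)
      (hgap (-x) h1 h2)
  rcases lt_or_gt_of_ne hb0 with hbneg | hbpos
  · refine ⟨-b, b - a - 1, by omega, by omega, by omega, by omega, by omega, by omega,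
      Or.inl ⟨iff_of_false (hu.not_rhoPos_neg hb) ?_, fun i hi1 hi2 hiff => ?_⟩⟩
    · rw [show -b + (b - a - 1) + 1 = -a by ring]
      exact hu.not_rhoPos_neg ha
    · exact hu.not_rhoPos_neg hb (hiff.2 (hflip _ (by omega) (by omega) (by omega)))
  rcases lt_or_gt_of_ne ha0 with haneg | hapos
  · -- a value `±1` would lie strictly between `a < 0 < b`
    have hone : a = -1 ∨ b = 1 := by
      by_contra! h
      by_cases h1 : RhoPos n u 1
      · exact hgap 1 (by omega) (by omega) h1
      · exact hgap (-1) (by omega) (by omega) (hu.rhoPos_neg_of_not_rhoPos one_ne_zero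
          (by omega) (by omega) h1)
    rcases hone with rfl | rfl
    · have h1 : ¬ RhoPos n u 1 := by simpa using hu.not_rhoPos_neg ha
      have hb1 : b ≠ 1 := by rintro rfl; exact h1 hb
      refine ⟨1, b - 2, le_rfl, by omega, by omega, by omega, by omega, by omega,
        Or.inr ⟨rfl, fun i hi1 hi2 => iff_of_false h1 (hgap _ (by omega) (by omega)),
          fun hiff => h1 (hiff.2 (by rwa [sub_add_cancel]))⟩⟩
    · have ha1 : a ≠ -1 := by rintro rfl; exact hu.not_rhoPos_neg hb ha
      refine ⟨1, -a - 2, le_rfl, by omega, by omega, by omega, by omega, by omega,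
        Or.inr ⟨rfl, fun i hi1 hi2 => iff_of_true hb (hflip _ (by omega) (by omega) (by omega)),
          fun hiff => hu.not_rhoPos_neg ha (by simpa using hiff.1 hb)⟩⟩
  · refine ⟨a, b - a - 1, by omega, by omega, by omega, by omega, by omega, by omega,
      Or.inl ⟨iff_of_true ha (by rwa [show a + (b - a - 1) + 1 = b by ring]),
        fun i hi1 hi2 hiff => hgap (a + i) (by omega) (by omega) (hiff.1 ha)⟩⟩

theorem exists_consecutiveValues_of_oddSandwich (hu : IsSigned n u) {r h : ℤ}
    (hs : OddSandwich n u r h) : ∃ a b, ConsecutiveValues n u a b ∧ a % 2 = b % 2 := by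
  obtain ⟨hr1, -, hh1, -, hodd, hrn, hcase⟩ := hs
  rcases hcase with ⟨hiff, hmid⟩ | ⟨rfl, hsame, hdiff⟩
  · by_cases hr : RhoPos n u r
    · refine ⟨r, r + h + 1, ⟨hr, hiff.1 hr, by omega, fun x hx1 hx2 hx => ?_⟩, by omega⟩
      exact hmid (x - r) (by omega) (by omega) (iff_of_true hr (by rwa [add_sub_cancel]))
    · refine ⟨-(r + h + 1), -r, ⟨hu.rhoPos_neg_of_not_rhoPos (by omega) (by omega) (by omega)
        (mt hiff.2 hr), hu.rhoPos_neg_of_not_rhoPos (by omega) (by omega) (by omega) hr, by omega,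
        fun x hx1 hx2 hx => ?_⟩, by omega⟩
      refine hu.not_rhoPos_neg hx (by_contra fun hnx => hmid (-x - r) (by omega) (by omega) ?_)
      exact iff_of_false hr (by rwa [add_sub_cancel])
  · have hrun : ∀ x, 1 ≤ x → x ≤ h + 1 → (RhoPos n u x ↔ RhoPos n u 1) := fun x hx1 hx2 => by
      rcases hx1.eq_or_lt with rfl | hx1
      · rfl
      · simpa using (hsame (x - 1) (by omega) (by omega)).symm
    by_cases h1 : RhoPos n u 1
    · refine ⟨-(h + 2), 1, ⟨hu.rhoPos_neg_of_not_rhoPos (by omega) (by omega) (by omega)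
        fun hh => hdiff (iff_of_true h1 hh), h1, by omega, fun x hx1 hx2 hx => ?_⟩, by omega⟩
      have hx0 := (hu.rhoPos_bounds hx).1
      exact hu.not_rhoPos_neg hx ((hrun (-x) (by omega) (by omega)).2 h1)
    · refine ⟨-1, h + 2, ⟨hu.rhoPos_neg_of_not_rhoPos one_ne_zero (by omega) (by omega) h1,
        by_contra fun hh => hdiff (iff_of_false h1 hh), by omega, fun x hx1 hx2 hx => ?_⟩, by omega⟩
      have hx0 := (hu.rhoPos_bounds hx).1
      exact h1 ((hrun x (by omega) (by omega)).1 hx)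

theorem chess_iff_not_exists_oddSandwich (hu : IsSigned n u)
    (hasc : StrictMonoOn u (Set.Icc 1 n)) : Chess n u ↔ ¬ ∃ r h, OddSandwich n u r h := by
  rw [chess_iff_forall_consecutiveValues hasc]
  constructor
  · rintro hc ⟨r, h, hs⟩
    obtain ⟨a, b, hab, hpar⟩ := hu.exists_consecutiveValues_of_oddSandwich hs
    exact hc a b hab hpar
  · intro hns a b hab hpar
    exact hns (hu.exists_oddSandwich_of_consecutiveValues hab hpar)

end IsSigned

section Factorisation

variable {n : ℕ} {u v : ℤ → ℤ}

theorem rhoPos_comp (hv : Set.BijOn v (Set.Icc 1 n) (Set.Icc 1 n)) :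
    RhoPos n (u ∘ v) = RhoPos n u := by
  ext x
  constructor
  · rintro ⟨j, hj, rfl⟩
    exact ⟨v j, Finset.mem_Icc.2 (hv.mapsTo (Finset.mem_Icc.1 hj)), rfl⟩
  · rintro ⟨m, hm, rfl⟩
    obtain ⟨j, hj, rfl⟩ := hv.surjOn (Finset.mem_Icc.1 hm)
    exact ⟨j, Finset.mem_Icc.2 hj, rfl⟩

theorem oddSandwich_comp (hv : Set.BijOn v (Set.Icc 1 n) (Set.Icc 1 n)) :
    OddSandwich n (u ∘ v) = OddSandwich n u := by
  unfold OddSandwich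
  rw [rhoPos_comp hv]

theorem chess_iff_chess_of_evenChess_comp (hv : Set.BijOn v (Set.Icc 1 n) (Set.Icc 1 n))
    (hwe : EvenChess n (u ∘ v)) : Chess n v ↔ Chess n u := by
  have hforall (p : ℤ → Prop) :
      (∀ m ∈ Finset.Icc (1 : ℤ) n, p m) ↔ ∀ j ∈ Finset.Icc (1 : ℤ) n, p (v j) := by
    simpa only [← Finset.coe_Icc, Finset.mem_coe] using hv.surjOn.forall hv.mapsTo
  have hpar : ∀ j ∈ Finset.Icc (1 : ℤ) n, (|v j| % 2 = j % 2 ↔ |u (v j)| % 2 = v j % 2) := by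
    intro j hj
    have hvj : 0 < v j := (hv.mapsTo (Finset.mem_Icc.1 hj)).1
    have := hwe j hj
    simp only [Function.comp_apply] at this
    rw [abs_of_pos hvj]
    omega
  unfold Chess
  rw [hforall (fun m => |u m| % 2 = m % 2), hforall (fun m => |u m| % 2 ≠ m % 2)]
  exact or_congr (forall₂_congr hpar) (forall₂_congr fun j hj => not_congr (hpar j hj))

end Factorisation

theorem mem_M_iff_no_odd_sandwich_general (n : ℕ) (w u v : ℤ → ℤ)
    (hu : IsSigned n u) (hv : IsSigned n v)
    (hasc : ∀ i j : ℤ, 1 ≤ i → i < j → j ≤ (n : ℤ) → u i < u j)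
    (hpos : ∀ j ∈ Finset.Icc (1 : ℤ) n, 0 < v j)
    (hfact : ∀ j : ℤ, w j = u (v j))
    (hwe : EvenChess n w) :
    (Chess n u ∧ Chess n v) ↔ ¬∃ r h : ℤ, OddSandwich n w r h := by
  obtain rfl : w = u ∘ v := funext hfact
  have hvbij := hv.bijOn_Icc_one_of_pos hpos
  have hmono : StrictMonoOn u (Set.Icc 1 n) := fun i hi j hj hij => hasc i j hi.1 hij hj.2
  rw [and_iff_left_of_imp (chess_iff_chess_of_evenChess_comp hvbij hwe).2, oddSandwich_comp hvbij]
  exact hu.chess_iff_not_exists_oddSandwich hmono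

/-- An even chessboard element `w` with parabolic factorisation `w = u·v`
(`u` ascending, `v ∈ Sₙ`) has both factors chessboard elements if and only if
`w` has no odd sandwich. -/
theorem mem_M_iff_no_odd_sandwich (n : ℕ) (w u v : ℤ → ℤ)
    (hw : IsSigned n w) (hu : IsSigned n u) (hv : IsSigned n v)
    (hasc : ∀ i j : ℤ, 1 ≤ i → i < j → j ≤ (n : ℤ) → u i < u j)
    (hpos : ∀ j ∈ Finset.Icc (1 : ℤ) n, 0 < v j)
    (hfact : ∀ j : ℤ, w j = u (v j))
    (hwe : EvenChess n w) :
    (Chess n u ∧ Chess n v) ↔ ¬∃ r h : ℤ, OddSandwich n w r h :=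
  mem_M_iff_no_odd_sandwich_general n w u v hu hv hasc hpos hfact hwe
end
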